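/- For m = 0, ℓ ≠ 0, w ≠ 0, the curve x(t) = (v/(ℓw))cos(ℓwt) + (u/(ℓw))sin(ℓwt) − v/(ℓw), y(t) = (v/(ℓw))sin(ℓwt) − (u/(ℓw))cos(ℓwt) + u/(ℓw), z(t) = wt + ((u²+v²)/(2w))t − ((u²+v²)/(2ℓw²))sin(ℓwt) is a geodesic of the Heisenberg metric ds²_{ℓ,0} = dx² + dy² + (dz + (ℓ/2)(y dx − x dy))², with γ(0) = 0 and initial velocity having frame components (u, v, w). -/

import Mathlib

/-! At `m = 0` the coefficient matrix is `g = diag(1, 1, 0) + θ θᵀ`, where `θ = heisForm ℓ` is the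
coefficient vector of the contact form `dz + (ℓ/2)(y dx − x dy)`. Since `θ` is affine with
antisymmetric Jacobian `J = heisFormJac ℓ`, the Christoffel quadratic form is
`Γ(v, v) = 2 (θ·v) g⁻¹ J v`, and since `det g = 1` the geodesic equation becomes
`g γ'' + 2 (θ·γ') J γ' = 0`. Along the curve `θ·γ' = w`: the vertical frame component of the
velocity is conserved. What remains is a polynomial identity in `sin (ℓwt)` and `cos (ℓwt)`. -/

open Real

/-- Partial derivative in the `i`-th coordinate direction on `ℝ³`. -/
noncomputable def pd3 (i : Fin 3) (f : (Fin 3 → ℝ) → ℝ) (p : Fin 3 → ℝ) : ℝ :=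
  fderiv ℝ f p (Pi.single i 1)

/-- `D = 1 + m (x² + y²)`. -/
noncomputable def Dcv (m : ℝ) (p : Fin 3 → ℝ) : ℝ := 1 + m * (p 0 ^ 2 + p 1 ^ 2)

/-- The Cartan–Vranceanu metric `ds²_{l,m}` in coordinates, as a matrix of coefficients. -/
noncomputable def gCV (l m : ℝ) (p : Fin 3 → ℝ) : Matrix (Fin 3) (Fin 3) ℝ :=
  !![1 / Dcv m p ^ 2 + (l * p 1 / (2 * Dcv m p)) ^ 2,
     -(l ^ 2 * p 0 * p 1) / (4 * Dcv m p ^ 2),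
     l * p 1 / (2 * Dcv m p);
     -(l ^ 2 * p 0 * p 1) / (4 * Dcv m p ^ 2),
     1 / Dcv m p ^ 2 + (l * p 0 / (2 * Dcv m p)) ^ 2,
     -(l * p 0) / (2 * Dcv m p);
     l * p 1 / (2 * Dcv m p),
     -(l * p 0) / (2 * Dcv m p),
     1]

/-- Christoffel symbols of the Levi-Civita connection of `gCV`. -/
noncomputable def christoffelCV (l m : ℝ) (k i j : Fin 3) (p : Fin 3 → ℝ) : ℝ :=
  (1 / 2) * ∑ r : Fin 3, (gCV l m p)⁻¹ k r *
    (pd3 i (fun q => gCV l m q r j) p + pd3 j (fun q => gCV l m q r i) p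
      - pd3 r (fun q => gCV l m q i j) p)

/-- The geodesic equation for `gCV` at time `t`. -/
def geodesicEqCV (l m : ℝ) (c : ℝ → Fin 3 → ℝ) (t : ℝ) : Prop :=
  ∀ k : Fin 3, deriv (deriv c) t k +
    ∑ i : Fin 3, ∑ j : Fin 3,
      christoffelCV l m k i j (c t) * deriv c t i * deriv c t j = 0

/-- The claimed geodesic of the Heisenberg group `(m = 0)` with `w ≠ 0`:
`x(t) = (v/(ℓw))cos(ℓwt) + (u/(ℓw))sin(ℓwt) − v/(ℓw)`,
`y(t) = (v/(ℓw))sin(ℓwt) − (u/(ℓw))cos(ℓwt) + u/(ℓw)`,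
`z(t) = wt + ((u²+v²)/(2w))t − ((u²+v²)/(2ℓw²))sin(ℓwt)`. -/
noncomputable def c10 (l u v w : ℝ) (t : ℝ) : Fin 3 → ℝ :=
  ![v / (l * w) * Real.cos (l * w * t) + u / (l * w) * Real.sin (l * w * t) - v / (l * w),
    v / (l * w) * Real.sin (l * w * t) - u / (l * w) * Real.cos (l * w * t) + u / (l * w),
    w * t + (u ^ 2 + v ^ 2) / (2 * w) * t
      - (u ^ 2 + v ^ 2) / (2 * l * w ^ 2) * Real.sin (l * w * t)]

open Matrix

noncomputable def heisForm (l : ℝ) (p : Fin 3 → ℝ) : Fin 3 → ℝ :=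
  ![l / 2 * p 1, -(l / 2) * p 0, 1]

noncomputable def heisFormJac (l : ℝ) : Matrix (Fin 3) (Fin 3) ℝ :=
  !![0, l / 2, 0; -(l / 2), 0, 0; 0, 0, 0]

lemma heisForm_eq_add_mulVec (l : ℝ) (p : Fin 3 → ℝ) :
    heisForm l p = Pi.single 2 1 + heisFormJac l *ᵥ p := by
  ext r
  fin_cases r <;> simp [heisForm, heisFormJac, dotProduct, Fin.sum_univ_three]

lemma gCV_zero_eq (l : ℝ) (p : Fin 3 → ℝ) :
    gCV l 0 p = diagonal ![1, 1, 0] + vecMulVec (heisForm l p) (heisForm l p) := by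
  have hD : Dcv 0 p = 1 := by simp [Dcv]
  ext i j
  fin_cases i <;> fin_cases j <;> simp [gCV, hD, heisForm] <;> ring

lemma det_gCV_zero (l : ℝ) (p : Fin 3 → ℝ) : (gCV l 0 p).det = 1 := by
  rw [gCV_zero_eq, det_fin_three]
  simp [heisForm]
  ring

section PartialDerivative

variable {f g : (Fin 3 → ℝ) → ℝ} {p : Fin 3 → ℝ}

lemma pd3_eq_of_hasFDerivAt {f' : (Fin 3 → ℝ) →L[ℝ] ℝ} (h : HasFDerivAt f f' p) (i : Fin 3) :
    pd3 i f p = f' (Pi.single i 1) := by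
  rw [pd3, h.fderiv]

lemma pd3_mul (hf : DifferentiableAt ℝ f p) (hg : DifferentiableAt ℝ g p) (i : Fin 3) :
    pd3 i (fun q => f q * g q) p = pd3 i f p * g p + f p * pd3 i g p := by
  rw [pd3_eq_of_hasFDerivAt (f := fun q => f q * g q) (hf.hasFDerivAt.mul hg.hasFDerivAt),
    pd3, pd3]
  simp only [_root_.add_apply, _root_.smul_apply, smul_eq_mul]
  ring

lemma pd3_const_add (a : ℝ) (f : (Fin 3 → ℝ) → ℝ) (i : Fin 3) (p : Fin 3 → ℝ) :
    pd3 i (fun q => a + f q) p = pd3 i f p := by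
  rw [pd3, fderiv_const_add, pd3]

end PartialDerivative

lemma hasFDerivAt_heisForm (l : ℝ) (r : Fin 3) (p : Fin 3 → ℝ) :
    HasFDerivAt (fun q => heisForm l q r)
      ((ContinuousLinearMap.proj r).comp (toLin' (heisFormJac l)).toContinuousLinearMap) p := by
  simp only [heisForm_eq_add_mulVec, Pi.add_apply]
  exact ((ContinuousLinearMap.proj r).comp
    (toLin' (heisFormJac l)).toContinuousLinearMap).hasFDerivAt.const_add _

lemma pd3_heisForm (l : ℝ) (i r : Fin 3) (p : Fin 3 → ℝ) :
    pd3 i (fun q => heisForm l q r) p = heisFormJac l r i := by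
  simp [pd3_eq_of_hasFDerivAt (hasFDerivAt_heisForm l r p)]

lemma pd3_gCV_zero (l : ℝ) (i r j : Fin 3) (p : Fin 3 → ℝ) :
    pd3 i (fun q => gCV l 0 q r j) p =
      heisFormJac l r i * heisForm l p j + heisForm l p r * heisFormJac l j i := by
  simp only [gCV_zero_eq, Matrix.add_apply, vecMulVec_apply, pd3_const_add]
  rw [pd3_mul (hasFDerivAt_heisForm l r p).differentiableAt
    (hasFDerivAt_heisForm l j p).differentiableAt, pd3_heisForm, pd3_heisForm]

lemma sum_pd3_gCV_zero (l : ℝ) (r : Fin 3) (p v : Fin 3 → ℝ) :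
    ∑ i, ∑ j, (pd3 i (fun q => gCV l 0 q r j) p + pd3 j (fun q => gCV l 0 q r i) p
      - pd3 r (fun q => gCV l 0 q i j) p) * v i * v j =
      4 * (heisForm l p ⬝ᵥ v) * (heisFormJac l *ᵥ v) r := by
  simp only [pd3_gCV_zero, Fin.sum_univ_three, mulVec, dotProduct]
  fin_cases r <;> simp [heisFormJac] <;> ring

lemma sum_christoffelCV_zero (l : ℝ) (k : Fin 3) (p v : Fin 3 → ℝ) :
    ∑ i, ∑ j, christoffelCV l 0 k i j p * v i * v j =
      2 * (heisForm l p ⬝ᵥ v) * ((gCV l 0 p)⁻¹ *ᵥ (heisFormJac l *ᵥ v)) k := by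
  calc ∑ i, ∑ j, christoffelCV l 0 k i j p * v i * v j
      = 1 / 2 * ∑ r, (gCV l 0 p)⁻¹ k r * ∑ i, ∑ j, (pd3 i (fun q => gCV l 0 q r j) p
          + pd3 j (fun q => gCV l 0 q r i) p - pd3 r (fun q => gCV l 0 q i j) p) * v i * v j := by
        simp only [christoffelCV, Fin.sum_univ_three]
        ring
    _ = 2 * (heisForm l p ⬝ᵥ v) * ((gCV l 0 p)⁻¹ *ᵥ (heisFormJac l *ᵥ v)) k := by
        simp only [sum_pd3_gCV_zero]
        simp only [mulVec, dotProduct, Fin.sum_univ_three]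
        ring

lemma geodesicEqCV_zero_of_mulVec (l : ℝ) {c : ℝ → Fin 3 → ℝ} {t : ℝ}
    (h : gCV l 0 (c t) *ᵥ deriv (deriv c) t
      + (2 * (heisForm l (c t) ⬝ᵥ deriv c t)) • (heisFormJac l *ᵥ deriv c t) = 0) :
    geodesicEqCV l 0 c t := by
  have hG : IsUnit (gCV l 0 (c t)).det := by rw [det_gCV_zero]; exact isUnit_one
  have hacc : deriv (deriv c) t = -(2 * (heisForm l (c t) ⬝ᵥ deriv c t)) •
      ((gCV l 0 (c t))⁻¹ *ᵥ (heisFormJac l *ᵥ deriv c t)) := by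
    rw [← mulVec_smul, neg_smul, ← eq_neg_of_add_eq_zero_left h, mulVec_mulVec,
      nonsing_inv_mul _ hG, one_mulVec]
  intro k
  rw [sum_christoffelCV_zero, hacc]
  simp only [Pi.smul_apply, smul_eq_mul]
  ring

lemma hasDerivAt_vec3 {a b c : ℝ → ℝ} {a' b' c' t : ℝ} (ha : HasDerivAt a a' t)
    (hb : HasDerivAt b b' t) (hc : HasDerivAt c c' t) :
    HasDerivAt (fun s => ![a s, b s, c s]) ![a', b', c'] t := by
  refine hasDerivAt_pi.2 fun i => ?_
  fin_cases i <;> assumption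

noncomputable def c10Vel (l u v w t : ℝ) : Fin 3 → ℝ :=
  ![u * cos (l * w * t) - v * sin (l * w * t), v * cos (l * w * t) + u * sin (l * w * t),
    w + (u ^ 2 + v ^ 2) / (2 * w) * (1 - cos (l * w * t))]

noncomputable def c10Acc (l u v w t : ℝ) : Fin 3 → ℝ :=
  ![-(l * w) * (v * cos (l * w * t) + u * sin (l * w * t)),
    l * w * (u * cos (l * w * t) - v * sin (l * w * t)),
    (u ^ 2 + v ^ 2) / (2 * w) * (l * w) * sin (l * w * t)]

lemma hasDerivAt_c10 (l u v w : ℝ) (hl : l ≠ 0) (hw : w ≠ 0) (t : ℝ) :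
    HasDerivAt (c10 l u v w) (c10Vel l u v w t) t := by
  have hphase : HasDerivAt (fun t : ℝ => l * w * t) (l * w) t := by
    simpa using (hasDerivAt_id t).const_mul (l * w)
  refine hasDerivAt_vec3 ?_ ?_ ?_
  · refine (((hphase.cos.const_mul (v / (l * w))).add
      (hphase.sin.const_mul (u / (l * w)))).sub_const (v / (l * w))).congr_deriv ?_
    field_simp
    ring
  · refine (((hphase.sin.const_mul (v / (l * w))).sub
      (hphase.cos.const_mul (u / (l * w)))).add_const (u / (l * w))).congr_deriv ?_
    field_simp
    ring
  · refine ((((hasDerivAt_id t).const_mul w).add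
      ((hasDerivAt_id t).const_mul ((u ^ 2 + v ^ 2) / (2 * w)))).sub
      (hphase.sin.const_mul ((u ^ 2 + v ^ 2) / (2 * l * w ^ 2)))).congr_deriv ?_
    field_simp
    ring

lemma hasDerivAt_c10Vel (l u v w t : ℝ) :
    HasDerivAt (c10Vel l u v w) (c10Acc l u v w t) t := by
  have hphase : HasDerivAt (fun t : ℝ => l * w * t) (l * w) t := by
    simpa using (hasDerivAt_id t).const_mul (l * w)
  refine hasDerivAt_vec3 ?_ ?_ ?_
  · exact ((hphase.cos.const_mul u).sub (hphase.sin.const_mul v)).congr_deriv (by ring)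
  · exact ((hphase.cos.const_mul v).add (hphase.sin.const_mul u)).congr_deriv (by ring)
  · exact (((hphase.cos.const_sub 1).const_mul ((u ^ 2 + v ^ 2) / (2 * w))).const_add
      w).congr_deriv (by ring)

lemma heisForm_c10_dotProduct_c10Vel (l u v w : ℝ) (hl : l ≠ 0) (hw : w ≠ 0) (t : ℝ) :
    heisForm l (c10 l u v w t) ⬝ᵥ c10Vel l u v w t = w := by
  simp [heisForm, c10, c10Vel, dotProduct, Fin.sum_univ_three]
  field_simp
  linear_combination (-(u ^ 2 + v ^ 2)) * sin_sq_add_cos_sq (l * w * t)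

lemma gCV_zero_c10_mulVec_c10Acc (l u v w : ℝ) (hl : l ≠ 0) (hw : w ≠ 0) (t : ℝ) :
    gCV l 0 (c10 l u v w t) *ᵥ c10Acc l u v w t
      + (2 * w) • (heisFormJac l *ᵥ c10Vel l u v w t) = 0 := by
  ext k
  fin_cases k <;>
    simp [gCV_zero_eq, heisForm, heisFormJac, c10, c10Vel, c10Acc, mulVec, dotProduct,
      Fin.sum_univ_three] <;>
    field_simp <;>
    ring

/-- For `m = 0`, `ℓ ≠ 0`, `w ≠ 0`, the curve `c10` is a geodesic of the Heisenberg
metric `ds²_{ℓ,0} = dx² + dy² + (dz + (ℓ/2)(y dx − x dy))²` with `γ(0) = 0` and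
initial velocity of frame components `(u, v, w)`. -/
theorem stmt10 (l u v w : ℝ) (hl : l ≠ 0) (hw : w ≠ 0) :
    c10 l u v w 0 = ![0, 0, 0] ∧
    deriv (c10 l u v w) 0 = ![u, v, w] ∧
    ∀ t : ℝ, geodesicEqCV l 0 (c10 l u v w) t := by
  have hvel : deriv (c10 l u v w) = c10Vel l u v w :=
    funext fun t => (hasDerivAt_c10 l u v w hl hw t).deriv
  refine ⟨by simp [c10], by simp [hvel, c10Vel], fun t => geodesicEqCV_zero_of_mulVec l ?_⟩
  rw [hvel, (hasDerivAt_c10Vel l u v w t).deriv, heisForm_c10_dotProduct_c10Vel l u v w hl hw t]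
  exact gCV_zero_c10_mulVec_c10Acc l u v w hl hw t
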